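/- For a stationary process {(X_n, Y_n, Z_n)} that is Markov of order at most k (but without assuming {(Y_n,Z_n)} is Markov), the finite-block conditional mutual information dominates the infinite-past one: I(Y_0 ; X_{-k}^0 | Y_{-k}^{-1}, Z_{-k}^0) ≥ I(Y_0 ; X_{-∞}^0 | Y_{-∞}^{-1}, Z_{-∞}^0); equivalently, for every j ≥ k, I(Y_0 ; X_{-k}^0 | Y_{-k}^{-1}, Z_{-k}^0) ≥ I(Y_0 ; X_{-j}^0 | Y_{-j}^{-1}, Z_{-j}^0). -/
import Mathlib


open MeasureTheory Real Filter Topology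

namespace CCDI

variable {Ω : Type*} [MeasurableSpace Ω]

/-- The probability of an event as a real number. -/
noncomputable def pr (μ : Measure Ω) (s : Set Ω) : ℝ := (μ s).toReal

/-- Shannon entropy (natural log) of a finite-valued random variable. -/
noncomputable def entH {S : Type*} [Fintype S] (μ : Measure Ω) (X : Ω → S) : ℝ :=
  -∑ s : S, pr μ (X ⁻¹' {s}) * Real.log (pr μ (X ⁻¹' {s}))

/-- Conditional Shannon entropy `H(X | Y) = H(X, Y) - H(Y)`. -/
noncomputable def condH {S T : Type*} [Fintype S] [Fintype T]
    (μ : Measure Ω) (X : Ω → S) (Y : Ω → T) : ℝ :=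
  entH μ (fun ω => (X ω, Y ω)) - entH μ Y

/-- Conditional mutual information `I(X ; Y | Z) = H(X|Z) + H(Y|Z) - H(X,Y|Z)`. -/
noncomputable def cmi {S T U : Type*} [Fintype S] [Fintype T] [Fintype U]
    (μ : Measure Ω) (X : Ω → S) (Y : Ω → T) (Z : Ω → U) : ℝ :=
  condH μ X Z + condH μ Y Z - condH μ (fun ω => (X ω, Y ω)) Z

/-- `X` and `Y` are conditionally independent given `Z`. -/
def CondIndep {S T U : Type*} (μ : Measure Ω) (X : Ω → S) (Y : Ω → T) (Z : Ω → U) : Prop :=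
  ∀ (x : S) (y : T) (z : U),
    pr μ (X ⁻¹' {x} ∩ Y ⁻¹' {y} ∩ Z ⁻¹' {z}) * pr μ (Z ⁻¹' {z}) =
      pr μ (X ⁻¹' {x} ∩ Z ⁻¹' {z}) * pr μ (Y ⁻¹' {y} ∩ Z ⁻¹' {z})

/-- The block `X_1^m` of a process indexed by positive times. -/
def blk1 {S : Type*} (X : ℕ → Ω → S) (m : ℕ) : Ω → Fin m → S :=
  fun ω j => X ((j : ℕ) + 1) ω

/-- The block `X_a^{a+m-1}` of a two-sided process. -/
def blkZ {S : Type*} (X : ℤ → Ω → S) (a : ℤ) (m : ℕ) : Ω → Fin m → S :=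
  fun ω j => X (a + (j : ℕ)) ω

/-- Directed information `I(X_1^n → Y_1^n) = ∑_{i=1}^n I(X_1^i ; Y_i | Y_1^{i-1})`. -/
noncomputable def DI {A B : Type*} [Fintype A] [Fintype B]
    (μ : Measure Ω) (X : ℕ → Ω → A) (Y : ℕ → Ω → B) (n : ℕ) : ℝ :=
  ∑ i ∈ Finset.range n, cmi μ (blk1 X (i + 1)) (Y (i + 1)) (blk1 Y i)

/-- Causal conditional directed information
`I(X_1^n → Y_1^n ‖ Z_1^n) = ∑_{i=1}^n I(X_1^i ; Y_i | Y_1^{i-1}, Z_1^i)`. -/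
noncomputable def ccdi1 {A B C : Type*} [Fintype A] [Fintype B] [Fintype C]
    (μ : Measure Ω) (X : ℕ → Ω → A) (Y : ℕ → Ω → B) (Z : ℕ → Ω → C) (n : ℕ) : ℝ :=
  ∑ i ∈ Finset.range n,
    cmi μ (blk1 X (i + 1)) (Y (i + 1)) (fun ω => (blk1 Y i ω, blk1 Z (i + 1) ω))

/-- CCDI for a two-sided process, over times `1,…,n`. -/
noncomputable def ccdiZ {A B C : Type*} [Fintype A] [Fintype B] [Fintype C]
    (μ : Measure Ω) (X : ℤ → Ω → A) (Y : ℤ → Ω → B) (Z : ℤ → Ω → C) (n : ℕ) : ℝ :=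
  ∑ i ∈ Finset.range n,
    cmi μ (blkZ X 1 (i + 1)) (Y ((i : ℤ) + 1)) (fun ω => (blkZ Y 1 i ω, blkZ Z 1 (i + 1) ω))

/-- Stationarity of a (two-sided) process: the law of every finite window is
translation-invariant. -/
def Stationary {S : Type*} (μ : Measure Ω) (W : ℤ → Ω → S) : Prop :=
  ∀ (m : ℕ) (t : ℤ) (w : Fin m → S),
    pr μ {ω | ∀ j : Fin m, W (t + (j : ℕ)) ω = w j} =
      pr μ {ω | ∀ j : Fin m, W ((j : ℕ) : ℤ) ω = w j}

/-- The process `W` is a Markov chain of order at most `k`: `W_n` is conditionally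
independent of any block of the past before time `n-k`, given `W_{n-k}^{n-1}`. -/
def MarkovOrder {S : Type*} (μ : Measure Ω) (W : ℤ → Ω → S) (k : ℕ) : Prop :=
  ∀ (n : ℤ) (m : ℕ),
    CondIndep μ (W n) (fun ω (j : Fin m) => W (n - (k : ℤ) - (m : ℤ) + (j : ℕ)) ω)
      (fun ω (j : Fin k) => W (n - (k : ℤ) + (j : ℕ)) ω)

/-- The empirical (uniform) measure on sample indices `{0,…,n-1}`. -/
noncomputable def empμ (n : ℕ) : Measure (Fin n) := ((n : ENNReal))⁻¹ • Measure.count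

/-- The plug-in estimator `Î_n^{(k)}(X → Y ‖ Z)` computed from a sample path:
the conditional mutual information `I(Y_0 ; X_{-k}^0 | Y_{-k}^{-1}, Z_{-k}^0)` under the
empirical distribution of the overlapping `(k+1)`-blocks at times `1,…,n`. -/
noncomputable def plugIn {A B C : Type*} [Fintype A] [Fintype B] [Fintype C]
    (k n : ℕ) (x : ℤ → A) (y : ℤ → B) (z : ℤ → C) : ℝ :=
  cmi (empμ n) (fun i : Fin n => y ((i : ℤ) + 1))
    (fun (i : Fin n) (j : Fin (k + 1)) => x ((i : ℤ) + 1 - (k : ℤ) + (j : ℕ)))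
    (fun i : Fin n =>
      ((fun j : Fin k => y ((i : ℤ) + 1 - (k : ℤ) + (j : ℕ))),
       (fun j : Fin (k + 1) => z ((i : ℤ) + 1 - (k : ℤ) + (j : ℕ)))))

/-- The plug-in estimator evaluated on the sample path of the processes at `ω`. -/
noncomputable def plugInP {A B C : Type*} [Fintype A] [Fintype B] [Fintype C]
    (k n : ℕ) (X : ℤ → Ω → A) (Y : ℤ → Ω → B) (Z : ℤ → Ω → C) (ω : Ω) : ℝ :=
  plugIn k n (fun t => X t ω) (fun t => Y t ω) (fun t => Z t ω)

/-- The probability mass function of `f` under `μ`. -/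
noncomputable def pmfOf {S : Type*} (μ : Measure Ω) (f : Ω → S) : S → ℝ :=
  fun s => pr μ (f ⁻¹' {s})

/-- Relative entropy (KL divergence) between two pmfs on a finite set. -/
noncomputable def Dkl {S : Type*} [Fintype S] (P Q : S → ℝ) : ℝ :=
  ∑ s : S, P s * Real.log (P s / Q s)

/-- Shannon entropy of a pmf on a finite set. -/
noncomputable def entP {S : Type*} [Fintype S] (P : S → ℝ) : ℝ :=
  -∑ s : S, P s * Real.log (P s)

/-- The process `W` is time-homogeneous with `k`-th order transition function `Q`. -/
def HomMarkov {S : Type*} (μ : Measure Ω) (W : ℤ → Ω → S) (k : ℕ)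
    (Q : (Fin k → S) → S → ℝ) : Prop :=
  ∀ (n : ℤ) (w : Fin k → S) (s : S),
    pr μ ({ω | ∀ j : Fin k, W (n - (k : ℤ) + (j : ℕ)) ω = w j} ∩ {ω | W n ω = s}) =
      Q w s * pr μ {ω | ∀ j : Fin k, W (n - (k : ℤ) + (j : ℕ)) ω = w j}

open scoped Classical in
/-- The transition matrix of the lifted (first order) chain of `k`-blocks induced by a
`k`-th order transition function `Q`. -/
noncomputable def Qlift {S : Type*} (k : ℕ) (Q : (Fin k → S) → S → ℝ) :
    Matrix (Fin k → S) (Fin k → S) ℝ :=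
  fun u v =>
    if h : (∀ (i : Fin k) (hi : (i : ℕ) + 1 < k), v i = u ⟨(i : ℕ) + 1, hi⟩) ∧ 0 < k then
      Q u (v ⟨k - 1, Nat.sub_lt h.2 Nat.one_pos⟩)
    else 0

/-- Irreducibility and aperiodicity of a `k`-th order transition function, expressed as
primitivity of the lifted block-transition matrix. -/
def Primitive {S : Type*} [Fintype S] [DecidableEq S] (k : ℕ)
    (Q : (Fin k → S) → S → ℝ) : Prop :=
  ∃ N : ℕ, ∀ u v : Fin k → S, 0 < (Qlift k Q ^ N) u v


/-! ### Auxiliary lemmas -/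

section Aux

variable {Ω : Type*} [MeasurableSpace Ω]

/-- All fibers (preimages of singletons) of `f` are measurable. -/
def FinMeas {S : Type*} (f : Ω → S) : Prop := ∀ s : S, MeasurableSet (f ⁻¹' {s})

lemma finMeas_of_measurable {S : Type*} [MeasurableSpace S] [MeasurableSingletonClass S]
    {f : Ω → S} (hf : Measurable f) : FinMeas f :=
  fun s => hf (measurableSet_singleton s)

lemma FinMeas.pair {S T : Type*} {f : Ω → S} {g : Ω → T} (hf : FinMeas f) (hg : FinMeas g) :
    FinMeas (fun ω => (f ω, g ω)) := by
  rintro ⟨s, t⟩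
  have h : (fun ω => (f ω, g ω)) ⁻¹' {(s, t)} = f ⁻¹' {s} ∩ g ⁻¹' {t} := by
    ext ω; simp [Prod.ext_iff]
  rw [h]; exact (hf s).inter (hg t)

lemma FinMeas.pi {ι S : Type*} [Countable ι] {f : ι → Ω → S} (hf : ∀ i, FinMeas (f i)) :
    FinMeas (fun ω (i : ι) => f i ω) := by
  intro w
  have h : (fun ω (i : ι) => f i ω) ⁻¹' {w} = ⋂ i, (f i) ⁻¹' {w i} := by
    ext ω; simp [funext_iff]
  rw [h]; exact MeasurableSet.iInter fun i => hf i (w i)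

lemma pr_nonneg (μ : Measure Ω) (s : Set Ω) : 0 ≤ pr μ s := ENNReal.toReal_nonneg

lemma pr_mono (μ : Measure Ω) [IsFiniteMeasure μ] {s t : Set Ω} (h : s ⊆ t) :
    pr μ s ≤ pr μ t :=
  ENNReal.toReal_mono (measure_ne_top μ t) (measure_mono h)

lemma pr_univ (μ : Measure Ω) [IsProbabilityMeasure μ] : pr μ Set.univ = 1 := by
  simp [pr]

lemma pr_fiber_sum {S : Type*} [Fintype S] (μ : Measure Ω) [IsFiniteMeasure μ]
    {f : Ω → S} (hf : FinMeas f) {E : Set Ω} (hE : MeasurableSet E) :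
    pr μ E = ∑ s : S, pr μ (E ∩ f ⁻¹' {s}) := by
  classical
  have hU : E = ⋃ s ∈ (Finset.univ : Finset S), E ∩ f ⁻¹' {s} := by
    ext ω; simp
  have hmeas : μ E = ∑ s : S, μ (E ∩ f ⁻¹' {s}) := by
    conv_lhs => rw [hU]
    rw [measure_biUnion_finset]
    · intro s _ t _ hst
      apply Set.disjoint_left.2
      rintro ω ⟨_, hs⟩ ⟨_, ht⟩
      simp only [Set.mem_preimage, Set.mem_singleton_iff] at hs ht
      exact hst (by rw [← hs, ← ht])
    · exact fun s _ => hE.inter (hf s)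
  rw [pr, hmeas, ENNReal.toReal_sum (fun s _ => measure_ne_top μ _)]
  rfl

lemma entH_comp {S T : Type*} [Fintype S] [Fintype T] (μ : Measure Ω) (X : Ω → S)
    {g : S → T} (hg : Function.Injective g) :
    entH μ (fun ω => g (X ω)) = entH μ X := by
  classical
  unfold entH
  congr 1
  have key : ∀ s : S, (fun ω => g (X ω)) ⁻¹' {g s} = X ⁻¹' {s} := by
    intro s; ext ω; simp [hg.eq_iff]
  calc ∑ t : T, pr μ ((fun ω => g (X ω)) ⁻¹' {t}) * Real.log (pr μ ((fun ω => g (X ω)) ⁻¹' {t}))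
      = ∑ t ∈ Finset.univ.image g,
          pr μ ((fun ω => g (X ω)) ⁻¹' {t}) * Real.log (pr μ ((fun ω => g (X ω)) ⁻¹' {t})) := by
        refine (Finset.sum_subset (Finset.subset_univ _) ?_).symm
        intro t _ ht
        have hempty : (fun ω => g (X ω)) ⁻¹' {t} = ∅ := by
          ext ω
          simp only [Set.mem_preimage, Set.mem_singleton_iff, Set.mem_empty_iff_false,
            iff_false]
          intro h
          exact ht (Finset.mem_image.2 ⟨X ω, Finset.mem_univ _, h⟩)
        rw [hempty]
        simp [pr]
    _ = ∑ s : S, pr μ ((fun ω => g (X ω)) ⁻¹' {g s}) *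
          Real.log (pr μ ((fun ω => g (X ω)) ⁻¹' {g s})) :=
        Finset.sum_image (fun a _ b _ h => hg h)
    _ = ∑ s : S, pr μ (X ⁻¹' {s}) * Real.log (pr μ (X ⁻¹' {s})) := by
        simp only [key]

end Aux

section CMIFacts

variable {Ω : Type*} [MeasurableSpace Ω]
variable {S T U : Type*} [Fintype S] [Fintype T] [Fintype U]

lemma preimage_pair (f : Ω → S) (g : Ω → T) (s : S) (t : T) :
    (fun ω => (f ω, g ω)) ⁻¹' {(s, t)} = f ⁻¹' {s} ∩ g ⁻¹' {t} := by
  ext ω; simp [Prod.ext_iff]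

private lemma sum3_swap_last (F : S → T → U → ℝ) :
    ∑ x : S, ∑ y : T, ∑ z : U, F x y z = ∑ x : S, ∑ z : U, ∑ y : T, F x y z :=
  Finset.sum_congr rfl fun _ _ => Finset.sum_comm

private lemma sum3_rot (F : S → T → U → ℝ) :
    ∑ x : S, ∑ y : T, ∑ z : U, F x y z = ∑ y : T, ∑ z : U, ∑ x : S, F x y z := by
  rw [Finset.sum_comm]
  exact Finset.sum_congr rfl fun _ _ => Finset.sum_comm

private lemma sum3_to_front (F : S → T → U → ℝ) :
    ∑ x : S, ∑ y : T, ∑ z : U, F x y z = ∑ z : U, ∑ x : S, ∑ y : T, F x y z := by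
  rw [sum3_swap_last, Finset.sum_comm]

lemma cmi_eq_sum (μ : Measure Ω) [IsProbabilityMeasure μ]
    {X : Ω → S} {Y : Ω → T} {Z : Ω → U}
    (hX : FinMeas X) (hY : FinMeas Y) (hZ : FinMeas Z) :
    cmi μ X Y Z = ∑ x : S, ∑ y : T, ∑ z : U,
      pr μ (X ⁻¹' {x} ∩ Y ⁻¹' {y} ∩ Z ⁻¹' {z}) *
        (Real.log (pr μ (X ⁻¹' {x} ∩ Y ⁻¹' {y} ∩ Z ⁻¹' {z}))
          + Real.log (pr μ (Z ⁻¹' {z}))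
          - Real.log (pr μ (X ⁻¹' {x} ∩ Z ⁻¹' {z}))
          - Real.log (pr μ (Y ⁻¹' {y} ∩ Z ⁻¹' {z}))) := by
  classical
  have mXZ : ∀ x z, pr μ (X ⁻¹' {x} ∩ Z ⁻¹' {z})
      = ∑ y : T, pr μ (X ⁻¹' {x} ∩ Y ⁻¹' {y} ∩ Z ⁻¹' {z}) := by
    intro x z
    rw [pr_fiber_sum μ hY ((hX x).inter (hZ z))]
    refine Finset.sum_congr rfl fun y _ => ?_
    congr 1
    ext ω; simp only [Set.mem_inter_iff, Set.mem_preimage]; tauto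
  have mYZ : ∀ y z, pr μ (Y ⁻¹' {y} ∩ Z ⁻¹' {z})
      = ∑ x : S, pr μ (X ⁻¹' {x} ∩ Y ⁻¹' {y} ∩ Z ⁻¹' {z}) := by
    intro y z
    rw [pr_fiber_sum μ hX ((hY y).inter (hZ z))]
    refine Finset.sum_congr rfl fun x _ => ?_
    congr 1
    ext ω; simp only [Set.mem_inter_iff, Set.mem_preimage]; tauto
  have mZ : ∀ z, pr μ (Z ⁻¹' {z})
      = ∑ x : S, ∑ y : T, pr μ (X ⁻¹' {x} ∩ Y ⁻¹' {y} ∩ Z ⁻¹' {z}) := by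
    intro z
    rw [pr_fiber_sum μ hX (hZ z)]
    refine Finset.sum_congr rfl fun x _ => ?_
    rw [pr_fiber_sum μ hY ((hZ z).inter (hX x))]
    refine Finset.sum_congr rfl fun y _ => ?_
    congr 1
    ext ω; simp only [Set.mem_inter_iff, Set.mem_preimage]; tauto
  have eXZ : entH μ (fun ω => (X ω, Z ω)) = -∑ x : S, ∑ z : U,
      pr μ (X ⁻¹' {x} ∩ Z ⁻¹' {z}) * Real.log (pr μ (X ⁻¹' {x} ∩ Z ⁻¹' {z})) := by
    unfold entH
    rw [Fintype.sum_prod_type]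
    simp only [preimage_pair]
  have eYZ : entH μ (fun ω => (Y ω, Z ω)) = -∑ y : T, ∑ z : U,
      pr μ (Y ⁻¹' {y} ∩ Z ⁻¹' {z}) * Real.log (pr μ (Y ⁻¹' {y} ∩ Z ⁻¹' {z})) := by
    unfold entH
    rw [Fintype.sum_prod_type]
    simp only [preimage_pair]
  have eXYZ : entH μ (fun ω => ((X ω, Y ω), Z ω)) = -∑ x : S, ∑ y : T, ∑ z : U,
      pr μ (X ⁻¹' {x} ∩ Y ⁻¹' {y} ∩ Z ⁻¹' {z}) *
        Real.log (pr μ (X ⁻¹' {x} ∩ Y ⁻¹' {y} ∩ Z ⁻¹' {z})) := by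
    unfold entH
    rw [Fintype.sum_prod_type]
    simp only [Fintype.sum_prod_type, preimage_pair]
  have hsplit : ∀ x y z, pr μ (X ⁻¹' {x} ∩ Y ⁻¹' {y} ∩ Z ⁻¹' {z}) *
        (Real.log (pr μ (X ⁻¹' {x} ∩ Y ⁻¹' {y} ∩ Z ⁻¹' {z}))
          + Real.log (pr μ (Z ⁻¹' {z}))
          - Real.log (pr μ (X ⁻¹' {x} ∩ Z ⁻¹' {z}))
          - Real.log (pr μ (Y ⁻¹' {y} ∩ Z ⁻¹' {z})))
      = pr μ (X ⁻¹' {x} ∩ Y ⁻¹' {y} ∩ Z ⁻¹' {z}) *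
          Real.log (pr μ (X ⁻¹' {x} ∩ Y ⁻¹' {y} ∩ Z ⁻¹' {z}))
        + pr μ (X ⁻¹' {x} ∩ Y ⁻¹' {y} ∩ Z ⁻¹' {z}) * Real.log (pr μ (Z ⁻¹' {z}))
        - pr μ (X ⁻¹' {x} ∩ Y ⁻¹' {y} ∩ Z ⁻¹' {z}) *
            Real.log (pr μ (X ⁻¹' {x} ∩ Z ⁻¹' {z}))
        - pr μ (X ⁻¹' {x} ∩ Y ⁻¹' {y} ∩ Z ⁻¹' {z}) *
            Real.log (pr μ (Y ⁻¹' {y} ∩ Z ⁻¹' {z})) := fun x y z => by ring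
  simp only [hsplit, Finset.sum_sub_distrib, Finset.sum_add_distrib]
  have hB : (∑ x : S, ∑ y : T, ∑ z : U,
      pr μ (X ⁻¹' {x} ∩ Y ⁻¹' {y} ∩ Z ⁻¹' {z}) * Real.log (pr μ (Z ⁻¹' {z})))
      = ∑ z : U, pr μ (Z ⁻¹' {z}) * Real.log (pr μ (Z ⁻¹' {z})) := by
    rw [sum3_to_front]
    refine Finset.sum_congr rfl fun z _ => ?_
    simp only [← Finset.sum_mul]
    rw [← mZ]
  have hC : (∑ x : S, ∑ y : T, ∑ z : U,
      pr μ (X ⁻¹' {x} ∩ Y ⁻¹' {y} ∩ Z ⁻¹' {z}) * Real.log (pr μ (X ⁻¹' {x} ∩ Z ⁻¹' {z})))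
      = ∑ x : S, ∑ z : U,
          pr μ (X ⁻¹' {x} ∩ Z ⁻¹' {z}) * Real.log (pr μ (X ⁻¹' {x} ∩ Z ⁻¹' {z})) := by
    rw [sum3_swap_last]
    refine Finset.sum_congr rfl fun x _ => Finset.sum_congr rfl fun z _ => ?_
    rw [← Finset.sum_mul, ← mXZ]
  have hD : (∑ x : S, ∑ y : T, ∑ z : U,
      pr μ (X ⁻¹' {x} ∩ Y ⁻¹' {y} ∩ Z ⁻¹' {z}) * Real.log (pr μ (Y ⁻¹' {y} ∩ Z ⁻¹' {z})))
      = ∑ y : T, ∑ z : U,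
          pr μ (Y ⁻¹' {y} ∩ Z ⁻¹' {z}) * Real.log (pr μ (Y ⁻¹' {y} ∩ Z ⁻¹' {z})) := by
    rw [sum3_rot]
    refine Finset.sum_congr rfl fun y _ => Finset.sum_congr rfl fun z _ => ?_
    rw [← Finset.sum_mul, ← mYZ]
  have eZ : entH μ Z = -∑ z : U, pr μ (Z ⁻¹' {z}) * Real.log (pr μ (Z ⁻¹' {z})) := rfl
  rw [hB, hC, hD]
  unfold cmi condH
  beta_reduce
  rw [eXZ, eYZ, eXYZ, eZ]
  ring

variable {Ω : Type*} [MeasurableSpace Ω]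
variable {S T U V : Type*} [Fintype S] [Fintype T] [Fintype U] [Fintype V]

lemma cmi_nonneg (μ : Measure Ω) [IsProbabilityMeasure μ]
    {X : Ω → S} {Y : Ω → T} {Z : Ω → U}
    (hX : FinMeas X) (hY : FinMeas Y) (hZ : FinMeas Z) :
    0 ≤ cmi μ X Y Z := by
  classical
  rw [cmi_eq_sum μ hX hY hZ]
  have hsubZ : ∀ x y z, pr μ (X ⁻¹' {x} ∩ Y ⁻¹' {y} ∩ Z ⁻¹' {z}) ≤ pr μ (Z ⁻¹' {z}) :=
    fun x y z => pr_mono μ Set.inter_subset_right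
  have hsubXZ : ∀ x y z, pr μ (X ⁻¹' {x} ∩ Y ⁻¹' {y} ∩ Z ⁻¹' {z}) ≤
      pr μ (X ⁻¹' {x} ∩ Z ⁻¹' {z}) :=
    fun x y z => pr_mono μ (Set.inter_subset_inter_left _ Set.inter_subset_left)
  have hsubYZ : ∀ x y z, pr μ (X ⁻¹' {x} ∩ Y ⁻¹' {y} ∩ Z ⁻¹' {z}) ≤
      pr μ (Y ⁻¹' {y} ∩ Z ⁻¹' {z}) :=
    fun x y z => pr_mono μ (Set.inter_subset_inter_left _ Set.inter_subset_right)
  have key : ∀ x y z,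
      pr μ (X ⁻¹' {x} ∩ Y ⁻¹' {y} ∩ Z ⁻¹' {z}) -
        pr μ (X ⁻¹' {x} ∩ Z ⁻¹' {z}) * pr μ (Y ⁻¹' {y} ∩ Z ⁻¹' {z}) / pr μ (Z ⁻¹' {z}) ≤
      pr μ (X ⁻¹' {x} ∩ Y ⁻¹' {y} ∩ Z ⁻¹' {z}) *
        (Real.log (pr μ (X ⁻¹' {x} ∩ Y ⁻¹' {y} ∩ Z ⁻¹' {z}))
          + Real.log (pr μ (Z ⁻¹' {z}))
          - Real.log (pr μ (X ⁻¹' {x} ∩ Z ⁻¹' {z}))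
          - Real.log (pr μ (Y ⁻¹' {y} ∩ Z ⁻¹' {z}))) := by
    intro x y z
    set p := pr μ (X ⁻¹' {x} ∩ Y ⁻¹' {y} ∩ Z ⁻¹' {z}) with hp_def
    set a := pr μ (X ⁻¹' {x} ∩ Z ⁻¹' {z}) with ha_def
    set b := pr μ (Y ⁻¹' {y} ∩ Z ⁻¹' {z}) with hb_def
    set c := pr μ (Z ⁻¹' {z}) with hc_def
    have hp0 : 0 ≤ p := pr_nonneg μ _
    have ha0 : 0 ≤ a := pr_nonneg μ _
    have hb0 : 0 ≤ b := pr_nonneg μ _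
    have hc0 : 0 ≤ c := pr_nonneg μ _
    rcases hp0.eq_or_lt with hp | hp
    · rw [← hp]
      simp only [zero_mul, zero_sub, neg_nonpos]
      positivity
    · have hcpos : 0 < c := lt_of_lt_of_le hp (hsubZ x y z)
      have hapos : 0 < a := lt_of_lt_of_le hp (hsubXZ x y z)
      have hbpos : 0 < b := lt_of_lt_of_le hp (hsubYZ x y z)
      set q := a * b / c with hq_def
      have hqpos : 0 < q := div_pos (mul_pos hapos hbpos) hcpos
      have hlq : Real.log q = Real.log a + Real.log b - Real.log c := by
        rw [hq_def, Real.log_div (mul_pos hapos hbpos).ne' hcpos.ne',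
          Real.log_mul hapos.ne' hbpos.ne']
      have h1 : Real.log (q / p) ≤ q / p - 1 := Real.log_le_sub_one_of_pos (div_pos hqpos hp)
      have h2 : p * Real.log (q / p) ≤ p * (q / p - 1) := mul_le_mul_of_nonneg_left h1 hp.le
      have h3 : p * (q / p - 1) = q - p := by field_simp
      have h4 : Real.log (q / p) = Real.log q - Real.log p := Real.log_div hqpos.ne' hp.ne'
      have h5 : p * (Real.log p + Real.log c - Real.log a - Real.log b)
          = -(p * Real.log (q / p)) := by rw [h4, hlq]; ring
      linarith
  have hps : ∀ x y, pr μ (X ⁻¹' {x} ∩ Y ⁻¹' {y})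
      = ∑ z : U, pr μ (X ⁻¹' {x} ∩ Y ⁻¹' {y} ∩ Z ⁻¹' {z}) :=
    fun x y => pr_fiber_sum μ hZ ((hX x).inter (hY y))
  have htot : (∑ x : S, ∑ y : T, ∑ z : U,
      pr μ (X ⁻¹' {x} ∩ Y ⁻¹' {y} ∩ Z ⁻¹' {z})) = 1 := by
    simp only [← hps]
    have h2 : ∀ x, pr μ (X ⁻¹' {x}) = ∑ y : T, pr μ (X ⁻¹' {x} ∩ Y ⁻¹' {y}) :=
      fun x => pr_fiber_sum μ hY (hX x)
    simp only [← h2]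
    have h3 : pr μ Set.univ = ∑ x : S, pr μ (X ⁻¹' {x}) := by
      rw [pr_fiber_sum μ hX MeasurableSet.univ]
      exact Finset.sum_congr rfl fun x _ => by rw [Set.univ_inter]
    rw [← h3]
    exact pr_univ μ
  have hmZb : ∀ z, pr μ (Z ⁻¹' {z}) = ∑ y : T, pr μ (Y ⁻¹' {y} ∩ Z ⁻¹' {z}) := by
    intro z
    rw [pr_fiber_sum μ hY (hZ z)]
    exact Finset.sum_congr rfl fun y _ => by rw [Set.inter_comm]
  have hqsum : (∑ x : S, ∑ y : T, ∑ z : U,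
      pr μ (X ⁻¹' {x} ∩ Z ⁻¹' {z}) * pr μ (Y ⁻¹' {y} ∩ Z ⁻¹' {z}) / pr μ (Z ⁻¹' {z})) = 1 := by
    have hxz : ∀ x z, (∑ y : T,
        pr μ (X ⁻¹' {x} ∩ Z ⁻¹' {z}) * pr μ (Y ⁻¹' {y} ∩ Z ⁻¹' {z}) / pr μ (Z ⁻¹' {z}))
        = pr μ (X ⁻¹' {x} ∩ Z ⁻¹' {z}) := by
      intro x z
      rcases (pr_nonneg μ (Z ⁻¹' {z})).eq_or_lt with hz | hz
      · have hle : pr μ (X ⁻¹' {x} ∩ Z ⁻¹' {z}) ≤ pr μ (Z ⁻¹' {z}) :=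
          pr_mono μ Set.inter_subset_right
        have hxz0 : pr μ (X ⁻¹' {x} ∩ Z ⁻¹' {z}) = 0 :=
          le_antisymm (by rw [← hz] at hle; exact hle) (pr_nonneg μ _)
        simp [hxz0]
      · have : (∑ y : T, pr μ (X ⁻¹' {x} ∩ Z ⁻¹' {z}) * pr μ (Y ⁻¹' {y} ∩ Z ⁻¹' {z})
            / pr μ (Z ⁻¹' {z}))
            = pr μ (X ⁻¹' {x} ∩ Z ⁻¹' {z}) * (∑ y : T, pr μ (Y ⁻¹' {y} ∩ Z ⁻¹' {z}))
              / pr μ (Z ⁻¹' {z}) := by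
          rw [Finset.mul_sum, Finset.sum_div]
        rw [this, ← hmZb z, mul_div_assoc, div_self hz.ne', mul_one]
    calc (∑ x : S, ∑ y : T, ∑ z : U,
        pr μ (X ⁻¹' {x} ∩ Z ⁻¹' {z}) * pr μ (Y ⁻¹' {y} ∩ Z ⁻¹' {z}) / pr μ (Z ⁻¹' {z}))
        = ∑ x : S, ∑ z : U, ∑ y : T,
          pr μ (X ⁻¹' {x} ∩ Z ⁻¹' {z}) * pr μ (Y ⁻¹' {y} ∩ Z ⁻¹' {z}) / pr μ (Z ⁻¹' {z}) :=
          sum3_swap_last _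
      _ = ∑ x : S, ∑ z : U, pr μ (X ⁻¹' {x} ∩ Z ⁻¹' {z}) :=
          Finset.sum_congr rfl fun x _ => Finset.sum_congr rfl fun z _ => hxz x z
      _ = 1 := by
          have h2 : ∀ x, pr μ (X ⁻¹' {x}) = ∑ z : U, pr μ (X ⁻¹' {x} ∩ Z ⁻¹' {z}) :=
            fun x => pr_fiber_sum μ hZ (hX x)
          simp only [← h2]
          have h3 : pr μ Set.univ = ∑ x : S, pr μ (X ⁻¹' {x}) := by
            rw [pr_fiber_sum μ hX MeasurableSet.univ]
            exact Finset.sum_congr rfl fun x _ => by rw [Set.univ_inter]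
          rw [← h3]
          exact pr_univ μ
  have hsum_le := Finset.sum_le_sum fun x (_ : x ∈ (Finset.univ : Finset S)) =>
    Finset.sum_le_sum fun y (_ : y ∈ (Finset.univ : Finset T)) =>
      Finset.sum_le_sum fun z (_ : z ∈ (Finset.univ : Finset U)) => key x y z
  have hLHS : (∑ x : S, ∑ y : T, ∑ z : U,
      (pr μ (X ⁻¹' {x} ∩ Y ⁻¹' {y} ∩ Z ⁻¹' {z}) -
        pr μ (X ⁻¹' {x} ∩ Z ⁻¹' {z}) * pr μ (Y ⁻¹' {y} ∩ Z ⁻¹' {z}) / pr μ (Z ⁻¹' {z})))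
      = 0 := by
    simp only [Finset.sum_sub_distrib]
    rw [htot, hqsum]
    ring
  linarith [hsum_le, hLHS.ge, hLHS.le]

lemma cmi_eq_zero_of_condIndep (μ : Measure Ω) [IsProbabilityMeasure μ]
    {X : Ω → S} {Y : Ω → T} {Z : Ω → U}
    (hX : FinMeas X) (hY : FinMeas Y) (hZ : FinMeas Z)
    (h : CondIndep μ X Y Z) : cmi μ X Y Z = 0 := by
  classical
  rw [cmi_eq_sum μ hX hY hZ]
  refine Finset.sum_eq_zero fun x _ => Finset.sum_eq_zero fun y _ =>
    Finset.sum_eq_zero fun z _ => ?_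
  rcases (pr_nonneg μ (X ⁻¹' {x} ∩ Y ⁻¹' {y} ∩ Z ⁻¹' {z})).eq_or_lt with hp | hp
  · rw [← hp, zero_mul]
  · have hc : 0 < pr μ (Z ⁻¹' {z}) :=
      lt_of_lt_of_le hp (pr_mono μ Set.inter_subset_right)
    have hprod : 0 < pr μ (X ⁻¹' {x} ∩ Z ⁻¹' {z}) * pr μ (Y ⁻¹' {y} ∩ Z ⁻¹' {z}) := by
      rw [← h x y z]; exact mul_pos hp hc
    have ha : 0 < pr μ (X ⁻¹' {x} ∩ Z ⁻¹' {z}) :=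
      lt_of_le_of_ne (pr_nonneg μ _) fun h0 => by rw [← h0] at hprod; simp at hprod
    have hb : 0 < pr μ (Y ⁻¹' {y} ∩ Z ⁻¹' {z}) := by
      rcases (pr_nonneg μ (Y ⁻¹' {y} ∩ Z ⁻¹' {z})).eq_or_lt with h0 | h0
      · rw [← h0] at hprod; simp at hprod
      · exact h0
    have hlog : Real.log (pr μ (X ⁻¹' {x} ∩ Y ⁻¹' {y} ∩ Z ⁻¹' {z}))
        + Real.log (pr μ (Z ⁻¹' {z}))
        = Real.log (pr μ (X ⁻¹' {x} ∩ Z ⁻¹' {z}))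
          + Real.log (pr μ (Y ⁻¹' {y} ∩ Z ⁻¹' {z})) := by
      rw [← Real.log_mul hp.ne' hc.ne', ← Real.log_mul ha.ne' hb.ne', h x y z]
    have hbr : Real.log (pr μ (X ⁻¹' {x} ∩ Y ⁻¹' {y} ∩ Z ⁻¹' {z}))
        + Real.log (pr μ (Z ⁻¹' {z}))
        - Real.log (pr μ (X ⁻¹' {x} ∩ Z ⁻¹' {z}))
        - Real.log (pr μ (Y ⁻¹' {y} ∩ Z ⁻¹' {z})) = 0 := by linarith
    rw [hbr, mul_zero]

lemma cmi_comp {S' T' U' : Type*} [Fintype S'] [Fintype T'] [Fintype U']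
    (μ : Measure Ω) (X : Ω → S) (Y : Ω → T) (Z : Ω → U)
    {g1 : S → S'} {g2 : T → T'} {g3 : U → U'}
    (h1 : Function.Injective g1) (h2 : Function.Injective g2) (h3 : Function.Injective g3) :
    cmi μ (fun ω => g1 (X ω)) (fun ω => g2 (Y ω)) (fun ω => g3 (Z ω)) = cmi μ X Y Z := by
  have e1 : entH μ (fun ω => g3 (Z ω)) = entH μ Z := entH_comp μ Z h3
  have e2 : entH μ (fun ω => (g1 (X ω), g3 (Z ω))) = entH μ (fun ω => (X ω, Z ω)) :=
    entH_comp μ (fun ω => (X ω, Z ω)) (g := Prod.map g1 g3) (h1.prodMap h3)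
  have e3 : entH μ (fun ω => (g2 (Y ω), g3 (Z ω))) = entH μ (fun ω => (Y ω, Z ω)) :=
    entH_comp μ (fun ω => (Y ω, Z ω)) (g := Prod.map g2 g3) (h2.prodMap h3)
  have e4 : entH μ (fun ω => ((g1 (X ω), g2 (Y ω)), g3 (Z ω)))
      = entH μ (fun ω => ((X ω, Y ω), Z ω)) :=
    entH_comp μ (fun ω => ((X ω, Y ω), Z ω)) (g := Prod.map (Prod.map g1 g2) g3)
      ((h1.prodMap h2).prodMap h3)
  unfold cmi condH
  beta_reduce
  rw [e1, e2, e3, e4]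

lemma cmi_comm (μ : Measure Ω) (X : Ω → S) (Y : Ω → T) (Z : Ω → U) :
    cmi μ X Y Z = cmi μ Y X Z := by
  have e : entH μ (fun ω => ((Y ω, X ω), Z ω)) = entH μ (fun ω => ((X ω, Y ω), Z ω)) :=
    entH_comp μ (fun ω => ((X ω, Y ω), Z ω)) (g := fun p => ((p.1.2, p.1.1), p.2))
      (by intro p q h; simp only [Prod.ext_iff] at h ⊢; tauto)
  unfold cmi condH
  beta_reduce
  rw [← e]
  ring

lemma cmi_chain (μ : Measure Ω) (Tv : Ω → V) (A : Ω → S) (B : Ω → T) (C : Ω → U) :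
    cmi μ Tv (fun ω => (A ω, B ω)) C
      = cmi μ Tv B C + cmi μ Tv A (fun ω => (B ω, C ω)) := by
  have e1 : entH μ (fun ω => (Tv ω, (B ω, C ω))) = entH μ (fun ω => ((Tv ω, B ω), C ω)) :=
    entH_comp μ (fun ω => ((Tv ω, B ω), C ω)) (g := fun p => (p.1.1, (p.1.2, p.2)))
      (by intro p q h; simp only [Prod.ext_iff] at h ⊢; tauto)
  have e2 : entH μ (fun ω => (A ω, (B ω, C ω))) = entH μ (fun ω => ((A ω, B ω), C ω)) :=
    entH_comp μ (fun ω => ((A ω, B ω), C ω)) (g := fun p => (p.1.1, (p.1.2, p.2)))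
      (by intro p q h; simp only [Prod.ext_iff] at h ⊢; tauto)
  have e3 : entH μ (fun ω => ((Tv ω, A ω), (B ω, C ω)))
      = entH μ (fun ω => ((Tv ω, (A ω, B ω)), C ω)) :=
    entH_comp μ (fun ω => ((Tv ω, (A ω, B ω)), C ω))
      (g := fun p => ((p.1.1, p.1.2.1), (p.1.2.2, p.2)))
      (by intro p q h; simp only [Prod.ext_iff] at h ⊢; tauto)
  unfold cmi condH
  beta_reduce
  rw [e1, e2, e3]
  ring

lemma cmi_comp2 {Ω : Type*} [MeasurableSpace Ω] {S T U T' U' : Type*}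
    [Fintype S] [Fintype T] [Fintype U] [Fintype T'] [Fintype U']
    (μ : Measure Ω) (X : Ω → S) (Y : Ω → T) (Z : Ω → U)
    {g2 : T → T'} {g3 : U → U'}
    (h2 : Function.Injective g2) (h3 : Function.Injective g3) :
    cmi μ X (fun ω => g2 (Y ω)) (fun ω => g3 (Z ω)) = cmi μ X Y Z := by
  have h := cmi_comp μ X Y Z (g1 := id) Function.injective_id h2 h3
  simpa only [id_eq] using h

lemma cmi_compY {Ω : Type*} [MeasurableSpace Ω] {S T U T' : Type*}
    [Fintype S] [Fintype T] [Fintype U] [Fintype T']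
    (μ : Measure Ω) (X : Ω → S) (Y : Ω → T) (Z : Ω → U)
    {g2 : T → T'} (h2 : Function.Injective g2) :
    cmi μ X (fun ω => g2 (Y ω)) Z = cmi μ X Y Z := by
  have h := cmi_comp μ X Y Z (g1 := id) (g3 := id) Function.injective_id h2
    Function.injective_id
  simpa only [id_eq] using h

lemma cmi_compZ {Ω : Type*} [MeasurableSpace Ω] {S T U U' : Type*}
    [Fintype S] [Fintype T] [Fintype U] [Fintype U']
    (μ : Measure Ω) (X : Ω → S) (Y : Ω → T) (Z : Ω → U)
    {g3 : U → U'} (h3 : Function.Injective g3) :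
    cmi μ X Y (fun ω => g3 (Z ω)) = cmi μ X Y Z := by
  have h := cmi_comp μ X Y Z (g1 := id) (g2 := id) Function.injective_id
    Function.injective_id h3
  simpa only [id_eq] using h

lemma restrict2_inj {α : Type*} {N m n : ℕ} (h : N = m + n) :
    Function.Injective (fun (u : Fin N → α) =>
      ((fun i : Fin m => u ⟨i.1, by have := i.isLt; omega⟩),
       (fun i : Fin n => u ⟨m + i.1, by have := i.isLt; omega⟩))) := by
  intro u v huv
  simp only [Prod.mk.injEq] at huv
  obtain ⟨h1, h2⟩ := huv
  funext r
  rcases Nat.lt_or_ge r.1 m with hr | hr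
  · exact congrFun h1 ⟨r.1, hr⟩
  · have hlt := r.isLt
    have hEq : r = (⟨m + (r.1 - m), by omega⟩ : Fin N) :=
      Fin.ext (by simp only [Fin.val_mk]; omega)
    rw [hEq]
    exact congrFun h2 ⟨r.1 - m, by omega⟩

lemma time_congr {Ω γ : Type*} (f : ℤ → Ω → γ) (ω : Ω) {s t : ℤ} (h : s = t) :
    f s ω = f t ω := by rw [h]
end CMIFacts

/-- For a stationary Markov chain of order at most `k`, the finite-block
conditional mutual information dominates the longer-past ones: for every `j ≥ k`,
`I(Y_0 ; X_{-k}^0 | Y_{-k}^{-1}, Z_{-k}^0) ≥ I(Y_0 ; X_{-j}^0 | Y_{-j}^{-1}, Z_{-j}^0)`. -/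
theorem cmi_block_antitone_of_markov
    {Ω A B C : Type*} [MeasurableSpace Ω]
    [MeasurableSpace A] [MeasurableSpace B] [MeasurableSpace C]
    [Fintype A] [Fintype B] [Fintype C]
    [MeasurableSingletonClass A] [MeasurableSingletonClass B] [MeasurableSingletonClass C]
    (μ : Measure Ω) [IsProbabilityMeasure μ]
    (X : ℤ → Ω → A) (Y : ℤ → Ω → B) (Z : ℤ → Ω → C)
    (hX : ∀ t, Measurable (X t)) (hY : ∀ t, Measurable (Y t)) (hZ : ∀ t, Measurable (Z t))
    (k : ℕ)
    (hstat : Stationary μ (fun t ω => (X t ω, Y t ω, Z t ω)))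
    (hM : MarkovOrder μ (fun t ω => (X t ω, Y t ω, Z t ω)) k) :
    ∀ j : ℕ, k ≤ j →
      cmi μ (Y 0) (blkZ X (-(j : ℤ)) (j + 1))
          (fun ω => (blkZ Y (-(j : ℤ)) j ω, blkZ Z (-(j : ℤ)) (j + 1) ω)) ≤
        cmi μ (Y 0) (blkZ X (-(k : ℤ)) (k + 1))
          (fun ω => (blkZ Y (-(k : ℤ)) k ω, blkZ Z (-(k : ℤ)) (k + 1) ω)) := by
  intro j hkj
  obtain ⟨m, rfl⟩ : ∃ m, j = k + m := ⟨j - k, by omega⟩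
  classical
  have fX : ∀ t, FinMeas (X t) := fun t => finMeas_of_measurable (hX t)
  have fY : ∀ t, FinMeas (Y t) := fun t => finMeas_of_measurable (hY t)
  have fZ : ∀ t, FinMeas (Z t) := fun t => finMeas_of_measurable (hZ t)
  have fbX : ∀ (a : ℤ) (n : ℕ), FinMeas (blkZ X a n) := fun a n => FinMeas.pi fun _ => fX _
  have fbY : ∀ (a : ℤ) (n : ℕ), FinMeas (blkZ Y a n) := fun a n => FinMeas.pi fun _ => fY _
  have fbZ : ∀ (a : ℤ) (n : ℕ), FinMeas (blkZ Z a n) := fun a n => FinMeas.pi fun _ => fZ _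
  set XJ : Ω → Fin (k + m + 1) → A := blkZ X (-((k + m : ℕ) : ℤ)) (k + m + 1) with hXJ
  set YJ : Ω → Fin (k + m) → B := blkZ Y (-((k + m : ℕ) : ℤ)) (k + m) with hYJ
  set ZJ : Ω → Fin (k + m + 1) → C := blkZ Z (-((k + m : ℕ) : ℤ)) (k + m + 1) with hZJ
  set XP : Ω → Fin m → A := blkZ X (-((k + m : ℕ) : ℤ)) m with hXP
  set YP : Ω → Fin m → B := blkZ Y (-((k + m : ℕ) : ℤ)) m with hYP
  set ZP : Ω → Fin m → C := blkZ Z (-((k + m : ℕ) : ℤ)) m with hZP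
  set XK : Ω → Fin (k + 1) → A := blkZ X (-(k : ℤ)) (k + 1) with hXK
  set YK : Ω → Fin k → B := blkZ Y (-(k : ℤ)) k with hYK
  set ZK : Ω → Fin (k + 1) → C := blkZ Z (-(k : ℤ)) (k + 1) with hZK
  set PB : Ω → Fin m → A × B × C := fun ω i =>
    (X ((0 : ℤ) - (k : ℤ) - (m : ℤ) + ((i : ℕ) : ℤ)) ω,
     Y ((0 : ℤ) - (k : ℤ) - (m : ℤ) + ((i : ℕ) : ℤ)) ω,
     Z ((0 : ℤ) - (k : ℤ) - (m : ℤ) + ((i : ℕ) : ℤ)) ω) with hPB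
  set WK : Ω → Fin k → A × B × C := fun ω i =>
    (X ((0 : ℤ) - (k : ℤ) + ((i : ℕ) : ℤ)) ω,
     Y ((0 : ℤ) - (k : ℤ) + ((i : ℕ) : ℤ)) ω,
     Z ((0 : ℤ) - (k : ℤ) + ((i : ℕ) : ℤ)) ω) with hWK
  have fXJ : FinMeas XJ := by rw [hXJ]; exact fbX _ _
  have fXP : FinMeas XP := by rw [hXP]; exact fbX _ _
  have fYP : FinMeas YP := by rw [hYP]; exact fbY _ _
  have fZP : FinMeas ZP := by rw [hZP]; exact fbZ _ _
  have fXK : FinMeas XK := by rw [hXK]; exact fbX _ _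
  have fYK : FinMeas YK := by rw [hYK]; exact fbY _ _
  have fZK : FinMeas ZK := by rw [hZK]; exact fbZ _ _
  have fPB : FinMeas PB := by
    rw [hPB]; exact FinMeas.pi fun i => (fX _).pair ((fY _).pair (fZ _))
  have fWK : FinMeas WK := by
    rw [hWK]; exact FinMeas.pi fun i => (fX _).pair ((fY _).pair (fZ _))
  -- the recoding maps
  set g2 : (Fin (k + m + 1) → A) → (Fin m → A) × (Fin (k + 1) → A) := fun u =>
    ((fun i : Fin m => u ⟨i.1, by have := i.isLt; omega⟩),
     (fun i : Fin (k + 1) => u ⟨m + i.1, by have := i.isLt; omega⟩)) with hg2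
  set g3 : (Fin (k + m) → B) × (Fin (k + m + 1) → C) →
      ((Fin m → B) × (Fin m → C)) × ((Fin k → B) × (Fin (k + 1) → C)) := fun p =>
    (((fun i : Fin m => p.1 ⟨i.1, by have := i.isLt; omega⟩),
      (fun i : Fin m => p.2 ⟨i.1, by have := i.isLt; omega⟩)),
     ((fun i : Fin k => p.1 ⟨m + i.1, by have := i.isLt; omega⟩),
      (fun i : Fin (k + 1) => p.2 ⟨m + i.1, by have := i.isLt; omega⟩))) with hg3
  set gp : ((Fin m → A) × (Fin (k + 1) → A)) × ((Fin m → B) × (Fin m → C)) →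
      (Fin m → A × B × C) × (Fin (k + 1) → A) := fun p =>
    ((fun i : Fin m => (p.1.1 i, p.2.1 i, p.2.2 i)), p.1.2) with hgp
  set gq : (Fin (k + 1) → A) × ((Fin k → B) × (Fin (k + 1) → C)) →
      (A × C) × (Fin k → A × B × C) := fun p =>
    ((p.1 ⟨k, by omega⟩, p.2.2 ⟨k, by omega⟩),
     (fun i : Fin k => (p.1 ⟨i.1, by have := i.isLt; omega⟩, p.2.1 i,
        p.2.2 ⟨i.1, by have := i.isLt; omega⟩))) with hgq
  have hg2inj : Function.Injective g2 := by
    rw [hg2]; exact restrict2_inj (by omega)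
  have hg3inj : Function.Injective g3 := by
    rw [hg3]
    intro p q hpq
    simp only [Prod.mk.injEq] at hpq
    obtain ⟨⟨a1, a2⟩, b1, b2⟩ := hpq
    have e1 : p.1 = q.1 := restrict2_inj (show k + m = m + k by omega) (Prod.ext a1 b1)
    have e2 : p.2 = q.2 :=
      restrict2_inj (show k + m + 1 = m + (k + 1) by omega) (Prod.ext a2 b2)
    exact Prod.ext e1 e2
  have hgpinj : Function.Injective gp := by
    rw [hgp]
    intro p q hpq
    simp only [Prod.mk.injEq] at hpq
    obtain ⟨h1, h2⟩ := hpq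
    have c : ∀ i : Fin m, (p.1.1 i, p.2.1 i, p.2.2 i) = (q.1.1 i, q.2.1 i, q.2.2 i) :=
      fun i => congrFun h1 i
    simp only [Prod.mk.injEq] at c
    refine Prod.ext (Prod.ext ?_ ?_) (Prod.ext ?_ ?_)
    · exact funext fun i => (c i).1
    · exact h2
    · exact funext fun i => (c i).2.1
    · exact funext fun i => (c i).2.2
  have hgqinj : Function.Injective gq := by
    rw [hgq]
    intro p q hpq
    simp only [Prod.mk.injEq] at hpq
    obtain ⟨⟨hx0, hz0⟩, hw⟩ := hpq
    have c : ∀ i : Fin k, _ = _ := fun i => congrFun hw i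
    simp only [Prod.mk.injEq] at c
    refine Prod.ext ?_ (Prod.ext ?_ ?_)
    · funext r
      rcases Nat.lt_or_ge r.1 k with hr | hr
      · exact (c ⟨r.1, hr⟩).1
      · have hlt := r.isLt
        have hEq : r = (⟨k, by omega⟩ : Fin (k + 1)) :=
          Fin.ext (by simp only [Fin.val_mk]; omega)
        rw [hEq]; exact hx0
    · funext i; exact (c i).2.1
    · funext r
      rcases Nat.lt_or_ge r.1 k with hr | hr
      · exact (c ⟨r.1, hr⟩).2.2
      · have hlt := r.isLt
        have hEq : r = (⟨k, by omega⟩ : Fin (k + 1)) :=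
          Fin.ext (by simp only [Fin.val_mk]; omega)
        rw [hEq]; exact hz0
  -- Step A: split the long blocks
  have stepA : cmi μ (Y 0) XJ (fun ω => (YJ ω, ZJ ω))
      = cmi μ (Y 0) (fun ω => (XP ω, XK ω))
          (fun ω => ((YP ω, ZP ω), (YK ω, ZK ω))) := by
    have h := cmi_comp2 μ (Y 0) XJ (fun ω => (YJ ω, ZJ ω)) hg2inj hg3inj
    rw [← h]
    congr 1
    · congr 1
      funext ω
      simp only [hg2, hXJ, hXP, hXK, blkZ, Fin.val_mk]
      refine Prod.ext ?_ ?_ <;>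
        · funext i
          exact time_congr _ ω (by omega)
    · funext ω
      simp only [hg3, hYJ, hZJ, hYP, hZP, hYK, hZK, blkZ, Fin.val_mk]
      refine Prod.ext (Prod.ext ?_ ?_) (Prod.ext ?_ ?_) <;>
        · funext i
          exact time_congr _ ω (by omega)
  -- Step B: move the old (Y,Z)-past into the observable slot
  have stepB : cmi μ (Y 0) (fun ω => (XP ω, XK ω))
        (fun ω => ((YP ω, ZP ω), (YK ω, ZK ω)))
      ≤ cmi μ (Y 0) (fun ω => ((XP ω, XK ω), (YP ω, ZP ω)))
          (fun ω => (YK ω, ZK ω)) := by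
    have hnn : 0 ≤ cmi μ (Y 0) (fun ω => (YP ω, ZP ω)) (fun ω => (YK ω, ZK ω)) :=
      cmi_nonneg μ (fY 0) (fYP.pair fZP) (fYK.pair fZK)
    have hch := cmi_chain μ (Y 0) (fun ω => (XP ω, XK ω)) (fun ω => (YP ω, ZP ω))
      (fun ω => (YK ω, ZK ω))
    beta_reduce at hch
    linarith [hch, hnn]
  -- Step C: regroup the past into the Markov block
  have stepC : cmi μ (Y 0) (fun ω => ((XP ω, XK ω), (YP ω, ZP ω)))
        (fun ω => (YK ω, ZK ω))
      = cmi μ (Y 0) (fun ω => (PB ω, XK ω)) (fun ω => (YK ω, ZK ω)) := by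
    have h := cmi_compY μ (Y 0) (fun ω => ((XP ω, XK ω), (YP ω, ZP ω)))
      (fun ω => (YK ω, ZK ω)) hgpinj
    rw [← h]
    congr 1
    · congr 1
      funext ω
      simp only [hgp, hXP, hYP, hZP, hXK, hPB, blkZ, Fin.val_mk]
      refine Prod.ext ?_ rfl
      funext i
      refine Prod.ext ?_ (Prod.ext ?_ ?_) <;>
        · exact time_congr _ ω (by omega)
  -- Step D: chain rule
  have stepD : cmi μ (Y 0) (fun ω => (PB ω, XK ω)) (fun ω => (YK ω, ZK ω))
      = cmi μ (Y 0) XK (fun ω => (YK ω, ZK ω))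
        + cmi μ (Y 0) PB (fun ω => (XK ω, (YK ω, ZK ω))) := by
    have h := cmi_chain μ (Y 0) PB XK (fun ω => (YK ω, ZK ω))
    beta_reduce at h
    exact h
  -- Step E: recode the conditioning block
  have stepE : cmi μ (Y 0) PB (fun ω => (XK ω, (YK ω, ZK ω)))
      = cmi μ (Y 0) PB (fun ω => ((X 0 ω, Z 0 ω), WK ω)) := by
    have h := cmi_compZ μ (Y 0) PB (fun ω => (XK ω, (YK ω, ZK ω))) hgqinj
    rw [← h]
    congr 1
    funext ω
    simp only [hgq, hXK, hYK, hZK, hWK, blkZ, Fin.val_mk]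
    refine Prod.ext (Prod.ext ?_ ?_) ?_
    · exact time_congr _ ω (by omega)
    · exact time_congr _ ω (by omega)
    · funext i
      refine Prod.ext ?_ (Prod.ext ?_ ?_) <;>
        · exact time_congr _ ω (by omega)
  -- Step F: the Markov property kills the remaining term
  have stepF : cmi μ (Y 0) PB (fun ω => ((X 0 ω, Z 0 ω), WK ω)) = 0 := by
    have hCI : CondIndep μ (fun ω => (X 0 ω, Y 0 ω, Z 0 ω)) PB WK := hM 0 m
    have h0 : cmi μ (fun ω => (X 0 ω, Y 0 ω, Z 0 ω)) PB WK = 0 :=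
      cmi_eq_zero_of_condIndep μ ((fX 0).pair ((fY 0).pair (fZ 0))) fPB fWK hCI
    have h1 : cmi μ PB (fun ω => (X 0 ω, Y 0 ω, Z 0 ω)) WK = 0 :=
      (cmi_comm μ _ _ _).trans h0
    have h2 : cmi μ PB (fun ω => (Y 0 ω, (X 0 ω, Z 0 ω))) WK = 0 := by
      have hc := cmi_compY μ PB (fun ω => (X 0 ω, Y 0 ω, Z 0 ω)) WK
        (g2 := fun p : A × B × C => (p.2.1, (p.1, p.2.2)))
        (by intro p q h; simp only [Prod.ext_iff] at h ⊢; tauto)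
      exact hc.trans h1
    have h3 := cmi_chain μ PB (Y 0) (fun ω => (X 0 ω, Z 0 ω)) WK
    beta_reduce at h3
    rw [h2] at h3
    have h4 : 0 ≤ cmi μ PB (fun ω => (X 0 ω, Z 0 ω)) WK :=
      cmi_nonneg μ fPB ((fX 0).pair (fZ 0)) fWK
    have h5 : 0 ≤ cmi μ PB (Y 0) (fun ω => ((X 0 ω, Z 0 ω), WK ω)) :=
      cmi_nonneg μ fPB (fY 0) (((fX 0).pair (fZ 0)).pair fWK)
    have h6 : cmi μ PB (Y 0) (fun ω => ((X 0 ω, Z 0 ω), WK ω)) = 0 := by linarith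
    exact (cmi_comm μ _ _ _).trans h6
  calc cmi μ (Y 0) XJ (fun ω => (YJ ω, ZJ ω))
      = cmi μ (Y 0) (fun ω => (XP ω, XK ω))
          (fun ω => ((YP ω, ZP ω), (YK ω, ZK ω))) := stepA
    _ ≤ cmi μ (Y 0) (fun ω => ((XP ω, XK ω), (YP ω, ZP ω)))
          (fun ω => (YK ω, ZK ω)) := stepB
    _ = cmi μ (Y 0) (fun ω => (PB ω, XK ω)) (fun ω => (YK ω, ZK ω)) := stepC
    _ = cmi μ (Y 0) XK (fun ω => (YK ω, ZK ω))
        + cmi μ (Y 0) PB (fun ω => (XK ω, (YK ω, ZK ω))) := stepD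
    _ = cmi μ (Y 0) XK (fun ω => (YK ω, ZK ω)) + 0 := by rw [stepE, stepF]
    _ = cmi μ (Y 0) XK (fun ω => (YK ω, ZK ω)) := add_zero _

end CCDI
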